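/- arXiv:2302.05183 — 4 statements merged into one kernel-verified Lean document; each statement's English description precedes it below -/
import Mathlib

section
/- Existence of functions with prescribed extremely weak regularity (Theorem 2.5). Given any modulus of continuity ϖ₁, there exist a function f : ℝ → ℝ and a modulus of continuity ϖ₂ with limsup_{x→0+} ϖ₁(x)/ϖ₂(x) < ∞ such that: (a) f is ϖ₂-continuous, i.e. |f(x) − f(y)| ≤ ϖ₂(|x − y|) whenever 0 < |x − y| ≤ 1; and (b) f is nowhere ϖ₁-continuous, i.e. for every x ∈ ℝ, every C > 0 and every δ > 0 there exists y with 0 < |y − x| < δ and |f(x) − f(y)| > C ϖ₁(|x − y|). -/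
open scoped Real

noncomputable section

/-- A modulus of continuity: a strictly increasing continuous function on `(0,∞)`,
positive there, tending to `0` at `0⁺`, with `limsup_{x→0⁺} x/ϖ(x) < ∞`. -/
def IsModulusOfContinuity (ϖ : ℝ → ℝ) : Prop :=
  StrictMonoOn ϖ (Set.Ioi 0) ∧ ContinuousOn ϖ (Set.Ioi 0) ∧ (∀ x > 0, 0 < ϖ x) ∧
  Filter.Tendsto ϖ (nhdsWithin 0 (Set.Ioi 0)) (nhds 0) ∧
  ∃ C > 0, ∀ᶠ x in nhdsWithin 0 (Set.Ioi 0), x ≤ C * ϖ x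

namespace NowhereAux

lemma sin_lip (u v : ℝ) : |Real.sin u - Real.sin v| ≤ |u - v| := by
  rw [Real.sin_sub_sin]
  calc |2 * Real.sin ((u - v) / 2) * Real.cos ((u + v) / 2)|
      = 2 * |Real.sin ((u - v) / 2)| * |Real.cos ((u + v) / 2)| := by
        rw [abs_mul, abs_mul]; norm_num
    _ ≤ 2 * |(u - v) / 2| * 1 := by
        apply mul_le_mul (mul_le_mul_of_nonneg_left Real.abs_sin_le_abs (by norm_num))
          (Real.abs_cos_le_one _) (abs_nonneg _) (by positivity)
    _ = |u - v| := by rw [abs_div]; simp [abs_two]; ring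

lemma sin_two (u v : ℝ) : |Real.sin u - Real.sin v| ≤ 2 := by
  have h1 := Real.neg_one_le_sin u
  have h2 := Real.sin_le_one u
  have h3 := Real.neg_one_le_sin v
  have h4 := Real.sin_le_one v
  rw [abs_le]; constructor <;> linarith

lemma shift (θ : ℝ) : ∃ s : ℝ, |s| = 1 ∧ 1 ≤ |Real.sin (θ + s * (π / 2)) - Real.sin θ| := by
  have h2 := Real.sin_sq_add_cos_sq θ
  by_contra hcon
  push_neg at hcon
  have h1 := hcon 1 abs_one
  have hm := hcon (-1) (by rw [abs_neg, abs_one])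
  have e1 : θ + 1 * (π / 2) = θ + π / 2 := by ring
  have e2 : θ + (-1) * (π / 2) = θ - π / 2 := by ring
  rw [e1, Real.sin_add_pi_div_two] at h1
  rw [e2, Real.sin_sub_pi_div_two] at hm
  have a1 := abs_lt.mp h1
  have a2 := abs_lt.mp hm
  nlinarith [a1.1, a1.2, a2.1, a2.2, h2]

/-- The recursive state: `(t n, a n, S n)` where `S n` is the running sum `∑_{k ≤ n} a k / t k`. -/
noncomputable def modState (ϖ : ℝ → ℝ) (next : ℕ → ℝ × ℝ × ℝ → ℝ) : ℕ → ℝ × ℝ × ℝ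
  | 0 => (1 / 2, ϖ (1 / 2), ϖ (1 / 2) / (1 / 2))
  | n + 1 =>
    let p := modState ϖ next n
    let t' := next n p
    let a' := max (((n : ℝ) + 2) * ϖ t') (8 * t' * p.2.2)
    (t', a', p.2.2 + a' / t')

lemma step_exists (ϖ : ℝ → ℝ) (h1 : IsModulusOfContinuity ϖ) :
    ∀ (n : ℕ) (p : ℝ × ℝ × ℝ), ∃ t' : ℝ,
      0 < p.1 → 0 < p.2.1 → 0 ≤ p.2.2 →
      0 < t' ∧ t' ≤ p.1 / 2 ∧ ((n : ℝ) + 2) * ϖ t' ≤ p.2.1 / 8 ∧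
        8 * t' * p.2.2 ≤ p.2.1 / 8 := by
  intro n p
  by_cases hp : 0 < p.1 ∧ 0 < p.2.1 ∧ 0 ≤ p.2.2
  · obtain ⟨hp1, hp2, hp3⟩ := hp
    obtain ⟨-, -, -, htend, -⟩ := h1
    have hA : (0:ℝ) < p.2.1 / 8 / ((n : ℝ) + 2) := by positivity
    have hB : (0:ℝ) < min (p.1 / 2) (p.2.1 / (64 * (p.2.2 + 1))) := by positivity
    have e1 : ∀ᶠ x in nhdsWithin 0 (Set.Ioi 0), ϖ x < p.2.1 / 8 / ((n : ℝ) + 2) :=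
      htend.eventually_lt_const hA
    have e2 : ∀ᶠ x in nhdsWithin (0:ℝ) (Set.Ioi 0),
        x ∈ Set.Ioo (0:ℝ) (min (p.1 / 2) (p.2.1 / (64 * (p.2.2 + 1)))) :=
      Ioo_mem_nhdsGT_of_mem ⟨le_refl 0, hB⟩
    obtain ⟨t', ht1, htpos, htlt⟩ := (e1.and e2).exists
    refine ⟨t', fun _ _ _ => ⟨htpos, le_trans htlt.le (min_le_left _ _), ?_, ?_⟩⟩
    · calc ((n : ℝ) + 2) * ϖ t' ≤ ((n : ℝ) + 2) * (p.2.1 / 8 / ((n : ℝ) + 2)) :=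
          mul_le_mul_of_nonneg_left ht1.le (by positivity)
        _ = p.2.1 / 8 := by field_simp
    · have ht' : t' ≤ p.2.1 / (64 * (p.2.2 + 1)) := le_trans htlt.le (min_le_right _ _)
      have hD : p.2.1 / (64 * (p.2.2 + 1)) * (64 * (p.2.2 + 1)) = p.2.1 :=
        div_mul_cancel₀ _ (by positivity)
      have hD0 : (0:ℝ) ≤ p.2.1 / (64 * (p.2.2 + 1)) := by positivity
      nlinarith [mul_le_mul_of_nonneg_right ht' (show (0:ℝ) ≤ 8 * p.2.2 by linarith)]
  · exact ⟨1, fun h1' h2' h3' => absurd ⟨h1', h2', h3'⟩ hp⟩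

lemma exists_seq (ϖ : ℝ → ℝ) (h1 : IsModulusOfContinuity ϖ) :
    ∃ t a : ℕ → ℝ, (∀ n, 0 < t n) ∧ (∀ n, t n ≤ (1/2 : ℝ) ^ (n + 1)) ∧ (∀ n, 0 < a n) ∧
      (∀ n, a (n + 1) ≤ a n / 8) ∧ (∀ n : ℕ, ((n : ℝ) + 1) * ϖ (t n) ≤ a n) ∧
      (∀ n, 8 * t n * (∑ k ∈ Finset.range n, a k / t k) ≤ a n) := by
  have hpos := h1.2.2.1
  choose next hnext using step_exists ϖ h1
  set F := modState ϖ next with hF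
  set t : ℕ → ℝ := fun n => (F n).1 with ht'
  set a : ℕ → ℝ := fun n => (F n).2.1 with ha'
  set S : ℕ → ℝ := fun n => (F n).2.2 with hS'
  have ht0 : t 0 = 1 / 2 := rfl
  have ha0 : a 0 = ϖ (1 / 2) := rfl
  have hS0 : S 0 = ϖ (1 / 2) / (1 / 2) := rfl
  have htsucc : ∀ n, t (n + 1) = next n (F n) := by
    intro n; simp only [ht', hF, modState]
  have hasucc : ∀ n, a (n + 1) = max (((n : ℝ) + 2) * ϖ (t (n + 1))) (8 * t (n + 1) * S n) := by
    intro n; simp only [ha', ht', hS', hF, modState]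
  have hSsucc : ∀ n, S (n + 1) = S n + a (n + 1) / t (n + 1) := by
    intro n; simp only [ha', ht', hS', hF, modState]
  have key : ∀ n, 0 < t n ∧ 0 < a n ∧ 0 ≤ S n ∧
      S n = ∑ k ∈ Finset.range (n + 1), a k / t k := by
    intro n; induction n with
    | zero =>
      have h12 : (0:ℝ) < ϖ (1 / 2) := hpos _ (by norm_num)
      refine ⟨by rw [ht0]; norm_num, by rw [ha0]; exact h12, ?_, ?_⟩
      · rw [hS0]; positivity
      · rw [hS0]; simp [Finset.sum_range_one, ht0, ha0]
    | succ n ih =>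
      obtain ⟨iht, iha, ihS, ihSeq⟩ := ih
      obtain ⟨Hpos, Hle, Hϖ, HS⟩ := hnext n (F n) iht iha ihS
      have htp : 0 < t (n + 1) := by rw [htsucc]; exact Hpos
      have hϖp : 0 < ϖ (t (n + 1)) := hpos _ htp
      have hap : 0 < a (n + 1) := by
        rw [hasucc]
        exact lt_of_lt_of_le (by positivity) (le_max_left _ _)
      refine ⟨htp, hap, ?_, ?_⟩
      · rw [hSsucc]
        have : 0 ≤ a (n + 1) / t (n + 1) := by positivity
        linarith
      · rw [hSsucc, ihSeq, Finset.sum_range_succ, Finset.sum_range_succ, Finset.sum_range_succ]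
  refine ⟨t, a, fun n => (key n).1, ?_, fun n => (key n).2.1, ?_, ?_, ?_⟩
  · intro n; induction n with
    | zero => rw [ht0]; norm_num
    | succ n ih =>
      obtain ⟨Hpos, Hle, Hϖ, HS⟩ := hnext n (F n) (key n).1 (key n).2.1 (key n).2.2.1
      calc t (n + 1) ≤ t n / 2 := by rw [htsucc]; exact Hle
        _ ≤ (1/2 : ℝ) ^ (n + 1) / 2 := by linarith
        _ = (1/2 : ℝ) ^ (n + 1 + 1) := by ring
  · intro n
    obtain ⟨Hpos, Hle, Hϖ, HS⟩ := hnext n (F n) (key n).1 (key n).2.1 (key n).2.2.1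
    rw [hasucc]
    apply max_le
    · rw [htsucc]; exact Hϖ
    · rw [htsucc]; exact HS
  · intro n
    cases n with
    | zero =>
      rw [ha0, ht0]; norm_num
    | succ n =>
      rw [hasucc]
      have e : (((n : ℕ) + 1 : ℕ) : ℝ) + 1 = (n : ℝ) + 2 := by push_cast; ring
      rw [e]
      exact le_max_left _ _
  · intro n
    cases n with
    | zero =>
      have h := (key 0).2.1
      simp only [Finset.range_zero, Finset.sum_empty, mul_zero]
      linarith
    | succ n =>
      have e : ∑ k ∈ Finset.range (n + 1), a k / t k = S n := ((key n).2.2.2).symm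
      rw [e, hasucc]
      exact le_max_right _ _

end NowhereAux
set_option maxHeartbeats 1000000 in
open Filter Set NowhereAux in
/-- Theorem 2.5: given any modulus of continuity `ϖ₁`, there are a function `f : ℝ → ℝ`
and a modulus of continuity `ϖ₂` weaker than `ϖ₁` (i.e. `limsup_{x→0⁺} ϖ₁(x)/ϖ₂(x) < ∞`)
such that `f` is `ϖ₂`-continuous but nowhere `ϖ₁`-continuous. -/
theorem exists_nowhere_modulus_continuous
    (ϖ₁ : ℝ → ℝ) (h1 : IsModulusOfContinuity ϖ₁) :
    ∃ (f : ℝ → ℝ) (ϖ₂ : ℝ → ℝ), IsModulusOfContinuity ϖ₂ ∧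
      (∃ C > 0, ∀ᶠ x in nhdsWithin 0 (Set.Ioi 0), ϖ₁ x ≤ C * ϖ₂ x) ∧
      (∀ x y : ℝ, 0 < |x - y| → |x - y| ≤ 1 → |f x - f y| ≤ ϖ₂ |x - y|) ∧
      (∀ x : ℝ, ∀ C > 0, ∀ δ > 0, ∃ y : ℝ,
        0 < |y - x| ∧ |y - x| < δ ∧ C * ϖ₁ |x - y| < |f x - f y|) := by
  obtain ⟨hmono, hcont, hpos, htend, C₀, hC₀, hev₀⟩ := h1
  obtain ⟨t, a, ht, htle, ha, hadec, haϖ, haS⟩ :=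
    exists_seq ϖ₁ ⟨hmono, hcont, hpos, htend, C₀, hC₀, hev₀⟩
  have hπ : (0:ℝ) < π := Real.pi_pos
  -- geometric decay of `a`
  have hdecay : ∀ n m : ℕ, a (n + m) ≤ a n * (1/2 : ℝ)^(3*m) := by
    intro n m
    induction m with
    | zero => simp
    | succ m ih =>
      calc a (n + (m + 1)) = a ((n + m) + 1) := by ring_nf
        _ ≤ a (n + m) / 8 := hadec _
        _ ≤ a n * (1/2 : ℝ)^(3*m) / 8 := by linarith
        _ = a n * (1/2 : ℝ)^(3*(m+1)) := by ring
  have h8 : ∀ m : ℕ, ((1/2:ℝ))^(3*m) = (1/8:ℝ)^m := by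
    intro m; rw [pow_mul]; norm_num
  have hdecay' : ∀ n m : ℕ, a (n + m) ≤ a n * (1/8 : ℝ)^m := by
    intro n m; rw [← h8]; exact hdecay n m
  have hgeo : Summable (fun n : ℕ => a 0 * (1/8 : ℝ)^n) :=
    (summable_geometric_of_lt_one (by norm_num) (by norm_num)).mul_left (a 0)
  have hasum : Summable a :=
    Summable.of_nonneg_of_le (fun n => (ha n).le) (fun n => by simpa using hdecay' 0 n) hgeo
  -- the function and the modulus
  set f : ℝ → ℝ := fun x => ∑' k, a k * Real.sin (2*π / t k * x) with hfdef
  set Ω : ℝ → ℝ := fun h => ∑' k, a k * min (2*π / t k * |h|) 2 with hΩdef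
  have hsinsum : ∀ x : ℝ, Summable (fun k => a k * Real.sin (2*π / t k * x)) := by
    intro x
    apply Summable.of_norm_bounded hasum
    intro k
    rw [Real.norm_eq_abs, abs_mul, abs_of_pos (ha k)]
    calc a k * |Real.sin (2*π / t k * x)| ≤ a k * 1 :=
        mul_le_mul_of_nonneg_left (Real.abs_sin_le_one _) (ha k).le
      _ = a k := mul_one _
  have hΩnn : ∀ (h : ℝ) (k : ℕ), 0 ≤ a k * min (2*π / t k * |h|) 2 := by
    intro h k
    exact mul_nonneg (ha k).le (le_min
      (mul_nonneg (div_nonneg (by positivity) (ht k).le) (abs_nonneg _)) (by norm_num))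
  have hΩsum : ∀ h : ℝ, Summable (fun k => a k * min (2*π / t k * |h|) 2) := by
    intro h
    apply Summable.of_nonneg_of_le (hΩnn h)
      (fun k => mul_le_mul_of_nonneg_left (min_le_right _ _) (ha k).le)
      (hasum.mul_right 2)
  have hΩnonneg : ∀ h : ℝ, 0 ≤ Ω h := fun h => tsum_nonneg (hΩnn h)
  -- per-term difference bound
  have hterm : ∀ (k : ℕ) (x y : ℝ),
      |a k * Real.sin (2*π / t k * x) - a k * Real.sin (2*π / t k * y)|
        ≤ a k * min (2*π / t k * |x - y|) 2 := by
    intro k x y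
    rw [← mul_sub, abs_mul, abs_of_pos (ha k)]
    apply mul_le_mul_of_nonneg_left _ (ha k).le
    apply le_min
    · calc |Real.sin (2*π / t k * x) - Real.sin (2*π / t k * y)|
          ≤ |2*π / t k * x - 2*π / t k * y| := sin_lip _ _
        _ = 2*π / t k * |x - y| := by
            rw [← mul_sub, abs_mul, abs_of_pos (div_pos (by positivity) (ht k))]
    · exact sin_two _ _
  -- ϖ₂-continuity estimate
  have hfdiff : ∀ x y : ℝ, |f x - f y| ≤ Ω (x - y) := by
    intro x y
    have heq : f x - f y =
        ∑' k, (a k * Real.sin (2*π / t k * x) - a k * Real.sin (2*π / t k * y)) :=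
      (Summable.tsum_sub (hsinsum x) (hsinsum y)).symm
    rw [heq]
    have := tsum_of_norm_bounded (hΩsum (x - y)).hasSum (fun k => by
      rw [Real.norm_eq_abs]; exact hterm k x y)
    rwa [Real.norm_eq_abs] at this
  have hΩmono : ∀ h₁ h₂ : ℝ, |h₁| ≤ |h₂| → Ω h₁ ≤ Ω h₂ := by
    intro h₁ h₂ hle
    apply Summable.tsum_le_tsum _ (hΩsum h₁) (hΩsum h₂)
    intro k
    exact mul_le_mul_of_nonneg_left
      (min_le_min (mul_le_mul_of_nonneg_left hle (div_nonneg (by positivity) (ht k).le)) le_rfl)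
      (ha k).le
  have hΩ0 : Ω 0 = 0 := by
    simp [hΩdef]
  have hΩcont : Continuous Ω := by
    rw [hΩdef]
    apply continuous_tsum (u := fun k => a k * 2)
    · intro k
      exact continuous_const.mul (((continuous_const.mul continuous_abs)).min continuous_const)
    · exact hasum.mul_right 2
    · intro k x
      rw [Real.norm_eq_abs, abs_of_nonneg (hΩnn x k)]
      exact mul_le_mul_of_nonneg_left (min_le_right _ _) (ha k).le
  -- the key lower bound
  have hlow : ∀ (x : ℝ) (n : ℕ), ∃ y : ℝ, |y - x| = t n / 4 ∧ a n / 4 ≤ |f x - f y| := by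
    intro x n
    obtain ⟨s, hs1, hs⟩ := shift (2*π / t n * x)
    set y := x + s * (t n / 4) with hydef
    have hyx : |y - x| = t n / 4 := by
      rw [hydef, add_sub_cancel_left, abs_mul, hs1, one_mul,
        abs_of_pos (by linarith [ht n] : (0:ℝ) < t n / 4)]
    refine ⟨y, hyx, ?_⟩
    have harg : 2*π / t n * y = 2*π / t n * x + s * (π/2) := by
      rw [hydef]
      have h0 : t n ≠ 0 := (ht n).ne'
      field_simp
      ring
    set u : ℕ → ℝ := fun k =>
      a k * Real.sin (2*π / t k * y) - a k * Real.sin (2*π / t k * x) with hudef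
    have husum : Summable u := (hsinsum y).sub (hsinsum x)
    have hfy : f y - f x = ∑' k, u k := (Summable.tsum_sub (hsinsum y) (hsinsum x)).symm
    have hsplit := husum.sum_add_tsum_nat_add (n+1)
    have hun : a n ≤ |u n| := by
      have e : u n = a n * (Real.sin (2*π / t n * x + s * (π/2)) - Real.sin (2*π / t n * x)) := by
        rw [hudef]; dsimp only; rw [harg]; ring
      rw [e, abs_mul, abs_of_pos (ha n)]
      calc a n = a n * 1 := (mul_one _).symm
        _ ≤ a n * |Real.sin (2*π / t n * x + s * (π/2)) - Real.sin (2*π / t n * x)| :=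
            mul_le_mul_of_nonneg_left hs (ha n).le
    have hS0 : (0:ℝ) ≤ ∑ k ∈ Finset.range n, a k / t k :=
      Finset.sum_nonneg (fun k _ => div_nonneg (ha k).le (ht k).le)
    have hlowfreq : |∑ k ∈ Finset.range n, u k| ≤ a n / 4 := by
      calc |∑ k ∈ Finset.range n, u k| ≤ ∑ k ∈ Finset.range n, |u k| :=
          Finset.abs_sum_le_sum_abs _ _
        _ ≤ ∑ k ∈ Finset.range n, 2 * t n * (a k / t k) := by
            apply Finset.sum_le_sum
            intro k _
            have h1 : |u k| ≤ a k * (2*π / t k * |y - x|) := by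
              rw [hudef]; dsimp only
              rw [← mul_sub, abs_mul, abs_of_pos (ha k)]
              apply mul_le_mul_of_nonneg_left _ (ha k).le
              calc |Real.sin (2*π / t k * y) - Real.sin (2*π / t k * x)|
                  ≤ |2*π / t k * y - 2*π / t k * x| := sin_lip _ _
                _ = 2*π / t k * |y - x| := by
                    rw [← mul_sub, abs_mul, abs_of_pos (div_pos (by positivity) (ht k))]
            rw [hyx] at h1
            have e : a k * (2*π / t k * (t n / 4)) = (π/2) * (t n * (a k / t k)) := by
              have h0 : t k ≠ 0 := (ht k).ne'
              field_simp
              ring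
            rw [e] at h1
            have hp4 : π ≤ 4 := Real.pi_le_four
            have hpos' : 0 < t n * (a k / t k) :=
              mul_pos (ht n) (div_pos (ha k) (ht k))
            nlinarith
        _ = 2 * t n * ∑ k ∈ Finset.range n, (a k / t k) := by rw [Finset.mul_sum]
        _ ≤ a n / 4 := by have := haS n; nlinarith [ht n]
    have htail : |∑' k, u (k + (n+1))| ≤ 2 * a n / 7 := by
      have hb : ∀ k : ℕ, ‖u (k + (n+1))‖ ≤ 2 * a (n+1) * (1/8 : ℝ)^k := by
        intro k
        have h1 : |u (k + (n+1))| ≤ 2 * a (k + (n+1)) := by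
          rw [hudef]; dsimp only
          rw [← mul_sub, abs_mul, abs_of_pos (ha _)]
          have h2 := sin_two (2*π / t (k + (n+1)) * y) (2*π / t (k + (n+1)) * x)
          nlinarith [ha (k + (n+1))]
        have h2 : a (k + (n+1)) ≤ a (n+1) * (1/8 : ℝ)^k := by
          have := hdecay' (n+1) k
          rwa [add_comm (n+1) k] at this
        rw [Real.norm_eq_abs]
        calc |u (k + (n+1))| ≤ 2 * a (k + (n+1)) := h1
          _ ≤ 2 * (a (n+1) * (1/8 : ℝ)^k) := by linarith
          _ = 2 * a (n+1) * (1/8 : ℝ)^k := by ring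
      have hgs : HasSum (fun k : ℕ => 2 * a (n+1) * (1/8 : ℝ)^k) (2 * a (n+1) * (1 - 1/8 : ℝ)⁻¹) :=
        (hasSum_geometric_of_lt_one (by norm_num) (by norm_num)).mul_left _
      have hle := tsum_of_norm_bounded hgs hb
      rw [Real.norm_eq_abs] at hle
      have han1 := hadec n
      have e : (2 : ℝ) * a (n+1) * (1 - 1/8 : ℝ)⁻¹ = 16/7 * a (n+1) := by norm_num; ring
      rw [e] at hle
      calc |∑' k, u (k + (n+1))| ≤ 16/7 * a (n+1) := hle
        _ ≤ 16/7 * (a n / 8) := by nlinarith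
        _ ≤ 2 * a n / 7 := by nlinarith [ha n]
    have heq : u n = (f y - f x) - (∑ k ∈ Finset.range n, u k) - (∑' k, u (k + (n+1))) := by
      rw [hfy, ← hsplit, Finset.sum_range_succ]
      ring
    have htri : |u n| ≤ |f y - f x| + |∑ k ∈ Finset.range n, u k| + |∑' k, u (k + (n+1))| := by
      rw [heq]
      calc |((f y - f x) - (∑ k ∈ Finset.range n, u k)) - (∑' k, u (k + (n+1)))|
          ≤ |(f y - f x) - (∑ k ∈ Finset.range n, u k)| + |∑' k, u (k + (n+1))| := abs_sub _ _
        _ ≤ |f y - f x| + |∑ k ∈ Finset.range n, u k| + |∑' k, u (k + (n+1))| := by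
            have := abs_sub (f y - f x) (∑ k ∈ Finset.range n, u k)
            linarith
    have : a n / 4 ≤ |f y - f x| := by linarith [ha n]
    rwa [abs_sub_comm] at this
  -- assemble everything
  refine ⟨f, fun h => ϖ₁ h + Ω h, ⟨?_, ?_, ?_, ?_, ?_⟩, ?_, ?_, ?_⟩
  · -- strict mono
    intro x hx y hy hxy
    have h1 := hmono hx hy hxy
    have h2 : Ω x ≤ Ω y := hΩmono x y (by
      rw [abs_of_pos (mem_Ioi.mp hx), abs_of_pos (mem_Ioi.mp hy)]; exact hxy.le)
    exact add_lt_add_of_lt_of_le h1 h2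
  · -- continuity
    exact hcont.add hΩcont.continuousOn
  · -- positivity
    intro x hx
    show 0 < ϖ₁ x + Ω x
    have := hpos x hx
    have := hΩnonneg x
    linarith
  · -- tendsto 0
    have h2 : Tendsto Ω (nhdsWithin (0:ℝ) (Set.Ioi 0)) (nhds 0) := by
      have h3 : Tendsto Ω (nhds (0:ℝ)) (nhds (Ω 0)) := hΩcont.tendsto 0
      rw [hΩ0] at h3
      exact h3.mono_left nhdsWithin_le_nhds
    simpa using htend.add h2
  · -- x ≤ C ϖ₂ x
    refine ⟨C₀, hC₀, hev₀.mono (fun x hx => hx.trans ?_)⟩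
    show C₀ * ϖ₁ x ≤ C₀ * (ϖ₁ x + Ω x)
    nlinarith [hΩnonneg x, hC₀]
  · -- ϖ₁ ≤ C ϖ₂
    refine ⟨1, one_pos, Eventually.of_forall (fun x => ?_)⟩
    show ϖ₁ x ≤ 1 * (ϖ₁ x + Ω x)
    have := hΩnonneg x
    linarith
  · -- ϖ₂-continuity of f
    intro x y h0 h1'
    have hd := hfdiff x y
    have e : Ω (x - y) = Ω |x - y| := by
      rw [hΩdef]
      simp [abs_abs]
    have := hpos _ h0
    rw [e] at hd
    show |f x - f y| ≤ ϖ₁ |x - y| + Ω |x - y|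
    linarith
  · -- nowhere ϖ₁-continuity
    intro x C hC δ hδ
    obtain ⟨m, hm⟩ := exists_pow_lt_of_lt_one (show (0:ℝ) < 4*δ by linarith)
      (show (1/2 : ℝ) < 1 by norm_num)
    set n := max m ⌈4*C⌉₊ with hn
    obtain ⟨y, hy1, hy2⟩ := hlow x n
    have htn := ht n
    refine ⟨y, ?_, ?_, ?_⟩
    · rw [hy1]; linarith [ht n]
    · rw [hy1]
      have h1 : t n ≤ (1/2 : ℝ)^(n+1) := htle n
      have h2 : ((1/2 : ℝ))^(n+1) ≤ (1/2 : ℝ)^m :=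
        pow_le_pow_of_le_one (by norm_num) (by norm_num)
          (le_trans (le_max_left m _) (Nat.le_succ n))
      linarith
    · have hxy : |x - y| = t n / 4 := by rw [abs_sub_comm]; exact hy1
      rw [hxy]
      have hq : t n / 4 < t n := by linarith
      have hstrict : ϖ₁ (t n / 4) < ϖ₁ (t n) :=
        hmono (mem_Ioi.mpr (div_pos htn (by norm_num : (0:ℝ) < 4))) (mem_Ioi.mpr htn) hq
      have hCn : C ≤ ((n:ℝ) + 1) / 4 := by
        have h1 : (4*C : ℝ) ≤ (⌈4*C⌉₊ : ℝ) := Nat.le_ceil _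
        have h2 : ((⌈4*C⌉₊ : ℕ) : ℝ) ≤ (n : ℝ) := Nat.cast_le.mpr (le_max_right m _)
        linarith
      have hϖp := hpos (t n) htn
      have hkey := haϖ n
      calc C * ϖ₁ (t n / 4) < C * ϖ₁ (t n) := mul_lt_mul_of_pos_left hstrict hC
        _ ≤ (((n:ℝ) + 1) / 4) * ϖ₁ (t n) := mul_le_mul_of_nonneg_right hCn hϖp.le
        _ ≤ a n / 4 := by linarith
        _ ≤ |f x - f y| := hy2
end
end

section
/- Existence of continuous nowhere Hölder functions (consequence of Theorem 2.5 noted in Remark 2.7). There exists a continuous function f : ℝ → ℝ that is nowhere Hölder continuous: for every x ∈ ℝ, every exponent α ∈ (0,1), every constant C > 0 and every δ > 0, there exists y with 0 < |y − x| < δ and |f(x) − f(y)| > C |x − y|^α. -/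
/-! Take `f x = ∑ 2⁻ᵏ cos (2^(k²) x)`. Shifting `x` by `±π / (2 · 2^(n²))` leaves every term with
`k > n` unchanged, because its frequency turns the shift into a multiple of `2π`; for one of the
two signs the `n`-th term moves by at least `2⁻ⁿ`, while by the Lipschitz bound the earlier terms
together move by at most `n · 2^((n-1)² - (n-1)) · 2^(1-n²)`, a negligible fraction of that.
So `f` oscillates by `2⁻ⁿ⁻¹` at distance `≈ 2^(-n²)`, and `2^(-α n²) = o(2⁻ⁿ)` for every `α > 0`. -/

open scoped Real

noncomputable section

open Real Filter Finset Topology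

section CosineSeries

variable {a b : ℕ → ℝ}

theorem norm_mul_cos_le (c θ : ℝ) : ‖c * cos θ‖ ≤ |c| := by
  rw [norm_mul, Real.norm_eq_abs, Real.norm_eq_abs]
  exact mul_le_of_le_one_right (abs_nonneg c) (abs_cos_le_one θ)

theorem summable_mul_cos (ha : Summable fun k => |a k|) (x : ℝ) :
    Summable fun k => a k * cos (b k * x) :=
  ha.of_norm_bounded fun _ => norm_mul_cos_le _ _

theorem continuous_tsum_mul_cos (ha : Summable fun k => |a k|) :
    Continuous fun x => ∑' k, a k * cos (b k * x) :=
  continuous_tsum (fun k => by fun_prop) ha fun _ _ => norm_mul_cos_le _ _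

theorem tsum_mul_cos_sub_tsum_mul_cos {s : Finset ℕ} {x y : ℝ} (ha : Summable fun k => |a k|)
    (hper : ∀ k ∉ s, cos (b k * y) = cos (b k * x)) :
    ∑' k, a k * cos (b k * y) - ∑' k, a k * cos (b k * x) =
      ∑ k ∈ s, a k * (cos (b k * y) - cos (b k * x)) := by
  rw [← (summable_mul_cos ha y).tsum_sub (summable_mul_cos ha x)]
  simp_rw [← mul_sub]
  exact tsum_eq_sum fun k hk => by rw [hper k hk, sub_self, mul_zero]

theorem abs_sum_mul_cos_sub_le (s : Finset ℕ) (x y : ℝ) :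
    |∑ k ∈ s, a k * (cos (b k * y) - cos (b k * x))| ≤ ∑ k ∈ s, |a k| * |b k| * |y - x| := by
  refine (abs_sum_le_sum_abs _ _).trans (sum_le_sum fun k _ => ?_)
  rw [abs_mul, mul_assoc, ← abs_mul (b k), mul_sub]
  exact mul_le_mul_of_nonneg_left (abs_cos_sub_cos_le _ _) (abs_nonneg _)

end CosineSeries

theorem exists_one_le_abs_cos_add_sub_cos (θ : ℝ) :
    ∃ m : ℤ, |m| = 1 ∧ 1 ≤ |cos (θ + m * (π / 2)) - cos θ| := by
  by_cases h : 1 ≤ |sin θ + cos θ|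
  · refine ⟨1, rfl, ?_⟩
    have hshift : cos (θ + ((1 : ℤ) : ℝ) * (π / 2)) - cos θ = -(sin θ + cos θ) := by
      rw [Int.cast_one, one_mul, cos_add_pi_div_two]; ring
    rwa [hshift, abs_neg]
  · refine ⟨-1, rfl, ?_⟩
    have hshift : cos (θ + ((-1 : ℤ) : ℝ) * (π / 2)) - cos θ = sin θ - cos θ := by
      rw [Int.cast_neg, Int.cast_one, neg_one_mul, ← sub_eq_add_neg, cos_sub_pi_div_two]
    rw [hshift, ← one_le_sq_iff_one_le_abs]
    rw [← one_le_sq_iff_one_le_abs, not_le] at h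
    nlinarith [sin_sq_add_cos_sq θ]

def lacunaryAmp (k : ℕ) : ℝ := (2 ^ k)⁻¹

def lacunaryFreq (k : ℕ) : ℝ := 2 ^ (k ^ 2)

def lacunaryCos (x : ℝ) : ℝ := ∑' k, lacunaryAmp k * cos (lacunaryFreq k * x)

theorem lacunaryAmp_pos (k : ℕ) : 0 < lacunaryAmp k := by unfold lacunaryAmp; positivity

theorem lacunaryFreq_pos (k : ℕ) : 0 < lacunaryFreq k := by unfold lacunaryFreq; positivity

theorem summable_abs_lacunaryAmp : Summable fun k => |lacunaryAmp k| := by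
  simpa [lacunaryAmp, abs_inv] using summable_geometric_two

theorem continuous_lacunaryCos : Continuous lacunaryCos :=
  continuous_tsum_mul_cos summable_abs_lacunaryAmp

theorem cos_lacunaryFreq_mul_add {n k : ℕ} (hn : 1 ≤ n) (hk : n < k) (m : ℤ) (x : ℝ) :
    cos (lacunaryFreq k * (x + m * (π / 2) / lacunaryFreq n)) = cos (lacunaryFreq k * x) := by
  have hsq : n ^ 2 + 2 ≤ k ^ 2 := by nlinarith
  obtain ⟨j, hj⟩ : ∃ j, k ^ 2 = n ^ 2 + 2 + j := ⟨_, (Nat.add_sub_cancel' hsq).symm⟩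
  have hperiod : lacunaryFreq k * (x + m * (π / 2) / lacunaryFreq n) =
      lacunaryFreq k * x + ((m * 2 ^ j : ℤ) : ℝ) * (2 * π) := by
    simp only [lacunaryFreq, hj, pow_add]
    push_cast
    field_simp
  rw [hperiod, cos_add_int_mul_two_pi]

theorem monotone_lacunaryAmp_mul_lacunaryFreq :
    Monotone fun k => lacunaryAmp k * lacunaryFreq k := by
  refine monotone_nat_of_le_succ fun k => ?_
  have hstep : lacunaryAmp (k + 1) * lacunaryFreq (k + 1) =
      lacunaryAmp k * lacunaryFreq k * 4 ^ k := by
    simp only [lacunaryAmp, lacunaryFreq, show (k + 1) ^ 2 = k ^ 2 + 2 * k + 1 by ring,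
      pow_add, pow_mul]
    field_simp
    norm_num
  rw [hstep]
  exact le_mul_of_one_le_right (mul_pos (lacunaryAmp_pos k) (lacunaryFreq_pos k)).le
    (one_le_pow₀ (by norm_num))

theorem sum_lacunaryAmp_mul_lacunaryFreq_le {n : ℕ} (hn : 2 ≤ n) :
    ∑ k ∈ range (n + 1), lacunaryAmp k * lacunaryFreq k * (2 / lacunaryFreq (n + 1)) ≤
      lacunaryAmp (n + 1) / 2 := by
  have hscale : 0 ≤ 2 / lacunaryFreq (n + 1) := by have := lacunaryFreq_pos (n + 1); positivity
  calc _ ≤ ∑ _k ∈ range (n + 1), lacunaryAmp n * lacunaryFreq n * (2 / lacunaryFreq (n + 1)) :=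
        sum_le_sum fun k hk => mul_le_mul_of_nonneg_right
          (monotone_lacunaryAmp_mul_lacunaryFreq (mem_range_succ_iff.1 hk)) hscale
    _ ≤ _ := by
      have hn1 : (n : ℝ) + 1 ≤ 2 ^ n := by exact_mod_cast Nat.lt_two_pow_self
      have h4 : (4 : ℝ) ≤ 2 ^ n := by
        calc (4 : ℝ) = 2 ^ 2 := by norm_num
          _ ≤ 2 ^ n := pow_le_pow_right₀ one_le_two hn
      rw [sum_const, card_range, nsmul_eq_mul]
      simp only [lacunaryAmp, lacunaryFreq, show (n + 1) ^ 2 = n ^ 2 + 2 * n + 1 by ring,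
        pow_add, pow_mul']
      field_simp
      push_cast
      nlinarith

theorem exists_abs_lacunaryCos_sub_ge {n : ℕ} (hn : 3 ≤ n) (x : ℝ) :
    ∃ y, 0 < |y - x| ∧ |y - x| ≤ 2 / lacunaryFreq n ∧
      lacunaryAmp n / 2 ≤ |lacunaryCos y - lacunaryCos x| := by
  obtain ⟨n, rfl⟩ : ∃ m, n = m + 1 := ⟨n - 1, by omega⟩
  have hfreq := lacunaryFreq_pos (n + 1)
  obtain ⟨m, hm, hosc⟩ := exists_one_le_abs_cos_add_sub_cos (lacunaryFreq (n + 1) * x)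
  set y := x + m * (π / 2) / lacunaryFreq (n + 1)
  have hyx : |y - x| = π / 2 / lacunaryFreq (n + 1) := by
    rw [add_sub_cancel_left, abs_div, abs_mul, ← Int.cast_abs, hm, Int.cast_one, one_mul,
      abs_of_pos (by positivity), abs_of_pos hfreq]
  have hyx_le : |y - x| ≤ 2 / lacunaryFreq (n + 1) := by
    rw [hyx]; gcongr; linarith [pi_le_four]
  refine ⟨y, by rw [hyx]; positivity, hyx_le, ?_⟩
  set g := fun k => lacunaryAmp k * (cos (lacunaryFreq k * y) - cos (lacunaryFreq k * x))
  have hsplit : lacunaryCos y - lacunaryCos x = ∑ k ∈ range (n + 1), g k + g (n + 1) := by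
    rw [lacunaryCos, lacunaryCos, ← sum_range_succ,
      tsum_mul_cos_sub_tsum_mul_cos summable_abs_lacunaryAmp]
    intro k hk
    exact cos_lacunaryFreq_mul_add (by omega) (by simp at hk; omega) m x
  have hmain : lacunaryAmp (n + 1) ≤ |g (n + 1)| := by
    have hy : lacunaryFreq (n + 1) * y = lacunaryFreq (n + 1) * x + m * (π / 2) := by
      simp only [y]; field_simp
    rw [abs_mul, abs_of_pos (lacunaryAmp_pos _), hy]
    exact le_mul_of_one_le_right (lacunaryAmp_pos _).le hosc
  have hhead : |∑ k ∈ range (n + 1), g k| ≤ lacunaryAmp (n + 1) / 2 := by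
    refine (abs_sum_mul_cos_sub_le _ x y).trans
      ((sum_le_sum fun k _ => ?_).trans (sum_lacunaryAmp_mul_lacunaryFreq_le (by omega)))
    rw [abs_of_pos (lacunaryAmp_pos k), abs_of_pos (lacunaryFreq_pos k)]
    exact mul_le_mul_of_nonneg_left hyx_le (mul_pos (lacunaryAmp_pos k) (lacunaryFreq_pos k)).le
  rw [hsplit]
  calc lacunaryAmp (n + 1) / 2 ≤ |g (n + 1)| - |∑ k ∈ range (n + 1), g k| := by linarith
    _ ≤ |∑ k ∈ range (n + 1), g k + g (n + 1)| := by
      refine sub_le_iff_le_add.2 ?_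
      simpa using abs_sub (∑ k ∈ range (n + 1), g k + g (n + 1)) (∑ k ∈ range (n + 1), g k)

theorem tendsto_two_div_lacunaryFreq : Tendsto (fun n => 2 / lacunaryFreq n) atTop (𝓝 0) :=
  tendsto_const_nhds.div_atTop
    ((tendsto_pow_atTop_atTop_of_one_lt one_lt_two).comp (tendsto_pow_atTop two_ne_zero))

theorem eventually_mul_rpow_lt_lacunaryAmp {α C : ℝ} (hα : 0 < α) (hC : 0 ≤ C) :
    ∀ᶠ n in atTop, C * (2 / lacunaryFreq n) ^ α < lacunaryAmp n / 2 := by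
  filter_upwards [eventually_ge_atTop 2, tendsto_natCast_atTop_atTop.eventually_ge_atTop (4 / α),
    (tendsto_pow_atTop_atTop_of_one_lt one_lt_two).eventually_gt_atTop (2 * C)]
    with n hn hnα hnC
  have hαn : 4 ≤ α * n := by rwa [div_le_iff₀ hα, mul_comm] at hnα
  have hn' : (2 : ℝ) ≤ n := by exact_mod_cast hn
  have hscale : (2 / lacunaryFreq n) ^ α = (2 : ℝ) ^ ((1 - (n : ℝ) ^ 2) * α) := by
    rw [Real.rpow_mul zero_le_two, Real.rpow_sub two_pos, Real.rpow_one, lacunaryFreq,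
      ← Real.rpow_natCast]
    push_cast
    rfl
  have hamp : lacunaryAmp n / 2 = (2 : ℝ) ^ ((n : ℝ) - 1) * 2 ^ (-2 * (n : ℝ)) := by
    rw [← Real.rpow_add two_pos, show (n : ℝ) - 1 + -2 * n = -(n + 1) by ring,
      Real.rpow_neg zero_le_two, Real.rpow_add two_pos, Real.rpow_natCast, Real.rpow_one,
      lacunaryAmp]
    ring
  have hCn : C < (2 : ℝ) ^ ((n : ℝ) - 1) := by
    rw [Real.rpow_sub two_pos, Real.rpow_one, Real.rpow_natCast]
    linarith
  rw [hscale, hamp]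
  calc C * (2 : ℝ) ^ ((1 - (n : ℝ) ^ 2) * α) ≤ C * 2 ^ (-2 * (n : ℝ)) :=
        mul_le_mul_of_nonneg_left (Real.rpow_le_rpow_of_exponent_le one_le_two (by nlinarith)) hC
    _ < _ := mul_lt_mul_of_pos_right hCn (by positivity)

theorem exists_mul_rpow_lt_abs_sub_of_oscillation {f : ℝ → ℝ} {h ε : ℕ → ℝ} {x α C δ : ℝ}
    (hα : 0 ≤ α) (hC : 0 ≤ C) (hδ : 0 < δ) (hh : Tendsto h atTop (𝓝 0))
    (hCε : ∀ᶠ n in atTop, C * h n ^ α < ε n)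
    (hosc : ∀ᶠ n in atTop, ∃ y, 0 < |y - x| ∧ |y - x| ≤ h n ∧ ε n ≤ |f y - f x|) :
    ∃ y, 0 < |y - x| ∧ |y - x| < δ ∧ C * |x - y| ^ α < |f x - f y| := by
  obtain ⟨n, hnδ, hnC, y, hy0, hyh, hyε⟩ :=
    ((hh.eventually (gt_mem_nhds hδ)).and (hCε.and hosc)).exists
  refine ⟨y, hy0, hyh.trans_lt hnδ, ?_⟩
  rw [abs_sub_comm x y, abs_sub_comm (f x)]
  calc C * |y - x| ^ α ≤ C * h n ^ α := by gcongr
    _ < ε n := hnC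
    _ ≤ _ := hyε

/-- There exists a continuous function `f : ℝ → ℝ` that is nowhere Hölder continuous:
at every point, for every exponent `α ∈ (0,1)`, every constant `C > 0` and every
neighborhood, the Hölder bound fails. -/
theorem exists_continuous_nowhere_holder :
    ∃ f : ℝ → ℝ, Continuous f ∧
      ∀ x : ℝ, ∀ α ∈ Set.Ioo (0 : ℝ) 1, ∀ C > 0, ∀ δ > 0,
        ∃ y : ℝ, 0 < |y - x| ∧ |y - x| < δ ∧ C * |x - y| ^ α < |f x - f y| := by
  refine ⟨lacunaryCos, continuous_lacunaryCos, fun x α hα C hC δ hδ => ?_⟩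
  refine exists_mul_rpow_lt_abs_sub_of_oscillation hα.1.le hC.le hδ tendsto_two_div_lacunaryFreq
    (eventually_mul_rpow_lt_lacunaryAmp hα.1 hC.le) ?_
  filter_upwards [eventually_ge_atTop 3] with n hn using exists_abs_lacunaryCos_sub_ge hn x
end
end

section
/- Solution and estimate for the homological difference equation (Lemma 4.3). Let n ≥ 1, γ > 0, τ > 0, K ≥ 1, and let ω ∈ ℝⁿ satisfy |⟨k,ω⟩ − 2πk₀| ≥ γ|k|^{−τ} for all k ∈ ℤⁿ with 0 < |k| ≤ K and all k₀ ∈ ℤ. Then: (a) |e^{i⟨k,ω⟩} − 1| ≥ (2/π) γ |k|^{−τ} for all such k; (b) for any complex coefficients (c_k)_{0<|k|≤K}, the trigonometric polynomial U(θ) = Σ_{0<|k|≤K} c_k (e^{i⟨k,ω⟩} − 1)^{−1} e^{i⟨k,θ⟩} is the unique trigonometric polynomial with zero mean and frequencies supported in {k : 0 < |k| ≤ K} solving U(θ + ω) − U(θ) = Σ_{0<|k|≤K} c_k e^{i⟨k,θ⟩} for all θ ∈ ℝⁿ; (c) if moreover |c_k| ≤ M e^{−|k| a} for some M ≥ 0,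 a > 0, then for every 0 ≤ b < a, sup_{θ∈ℂⁿ, |Im θ| ≤ b} |U(θ)| ≤ (π/2) γ^{−1} M Σ_{0<|k|≤K} |k|^τ e^{−|k|(a−b)}. -/
open scoped Real

noncomputable section

/-- The canonical solution of the homological difference equation: coefficients
`U_k = c_k / (e^{i⟨k,ω⟩} − 1)` for `0 < |k| ≤ K` (ℓ¹ norm), and `0` otherwise. -/
def homSol (n : ℕ) (K : ℝ) (ω : Fin n → ℝ) (c : (Fin n → ℤ) → ℂ) : (Fin n → ℤ) → ℂ :=
  fun k =>
    if 0 < (∑ i, |(k i : ℝ)|) ∧ (∑ i, |(k i : ℝ)|) ≤ K then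
      c k / (Complex.exp (Complex.I * ((∑ i, (k i : ℝ) * ω i : ℝ) : ℂ)) - 1)
    else 0

/-!
(a) Reduce `⟨k,ω⟩` modulo `2π` into `[-π, π]`; there Jordan's inequality
`|sin t| ≥ (2/π)|t|` turns the Diophantine bound into a lower bound for `|e^{i⟨k,ω⟩} − 1|`.
(b) The characters `θ ↦ e^{i⟨k,θ⟩}` of `ℝⁿ` are pairwise distinct, hence linearly independent
(Dedekind–Artin), so the difference equation holds iff it holds coefficientwise:
`U_k (e^{i⟨k,ω⟩} − 1) = c_k`, and the divisors do not vanish by (a).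
(c) Bound each of the finitely many modes: `|e^{i⟨k,θ⟩}| ≤ e^{|k| b}` on the strip, and divide
`|c_k| ≤ M e^{−|k| a}` by the divisor bound of (a).
-/

open Complex

local notation "𝐞(" k ", " θ ")" => Complex.exp (Complex.I * ((∑ i, (k i : ℝ) * θ i : ℝ) : ℂ))

theorem exists_two_div_pi_mul_abs_sub_le_norm_exp_I_mul_sub_one (x : ℝ) :
    ∃ k₀ : ℤ, 2 / π * |x - 2 * π * k₀| ≤ ‖exp (I * x) - 1‖ := by
  set k₀ := round (x / (2 * π))
  refine ⟨k₀, ?_⟩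
  set t := x / 2 - k₀ * π with ht_def
  have ht : |t| ≤ π / 2 := by
    have h := abs_sub_round (x / (2 * π))
    have : t = π * (x / (2 * π) - k₀) := by rw [ht_def]; field_simp
    rw [this, abs_mul, abs_of_pos Real.pi_pos]
    nlinarith [Real.pi_pos]
  have hsin : |Real.sin (x / 2)| = |Real.sin t| := by
    rw [show x / 2 = t + k₀ * π by ring, Real.sin_add_int_mul_pi, abs_mul,
      abs_neg_one_zpow, one_mul]
  calc 2 / π * |x - 2 * π * k₀| = 2 * (2 / π * |t|) := by
        rw [show x - 2 * π * k₀ = 2 * t by ring, abs_mul, abs_two]; ring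
    _ ≤ 2 * |Real.sin t| := by gcongr; exact Real.mul_abs_le_abs_sin ht
    _ = ‖exp (I * x) - 1‖ := by
        rw [norm_exp_I_mul_ofReal_sub_one, norm_mul, Real.norm_eq_abs, Real.norm_eq_abs, hsin]
        norm_num

section
variable {ι : Type*} [Fintype ι]

theorem finite_setOf_sum_abs_le (K : ℝ) : {k : ι → ℤ | ∑ i, |(k i : ℝ)| ≤ K}.Finite := by
  classical
  refine (Set.finite_Icc (-fun _ => (⌈K⌉₊ : ℤ)) fun _ => ⌈K⌉₊).subset fun k hk => ?_
  have hki (i : ι) : |(k i : ℝ)| ≤ ⌈K⌉₊ :=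
    ((Finset.single_le_sum (fun j _ => abs_nonneg (k j : ℝ)) (Finset.mem_univ i)).trans hk).trans
      (Nat.le_ceil K)
  exact ⟨fun i => neg_le_of_abs_le (by exact_mod_cast hki i),
    fun i => le_of_abs_le (by exact_mod_cast hki i)⟩

def expInnerChar (k : ι → ℤ) : Multiplicative (ι → ℝ) →* ℂ where
  toFun θ := 𝐞(k, θ.toAdd)
  map_one' := by simp
  map_mul' θ θ' := by
    rw [← Complex.exp_add, ← mul_add]
    simp only [toAdd_mul, Pi.add_apply]
    push_cast [mul_add, Finset.sum_add_distrib]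
    rfl

theorem expInnerChar_injective : Function.Injective (expInnerChar (ι := ι)) := by
  classical
  intro k k' h
  funext i
  by_contra hne
  have hm : (k i - k' i : ℂ) ≠ 0 := sub_ne_zero.mpr (by exact_mod_cast hne)
  have hsingle (m : ι → ℤ) (t : ℝ) :
      expInnerChar m (.ofAdd (Pi.single i t)) = exp (I * (m i * t)) := by
    simp [expInnerChar, Pi.single_apply, apply_ite Complex.ofReal, mul_ite]
  -- at `θ = π / (kᵢ - k'ᵢ) • eᵢ` the two characters differ by the factor `e^{iπ} = -1`
  have h1 := DFunLike.congr_fun h (.ofAdd (Pi.single i (π / (k i - k' i))))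
  rw [hsingle, hsingle, ← div_eq_one_iff_eq (Complex.exp_ne_zero _), ← Complex.exp_sub] at h1
  rw [show Complex.I * (k i * ((π / (k i - k' i) : ℝ) : ℂ)) -
      Complex.I * (k' i * ((π / (k i - k' i) : ℝ) : ℂ)) = π * Complex.I by
    push_cast; field_simp, Complex.exp_pi_mul_I] at h1
  norm_num at h1

theorem linearIndependent_exp_inner :
    LinearIndependent ℂ fun (k : ι → ℤ) (θ : ι → ℝ) => 𝐞(k, θ) :=
  (linearIndependent_monoidHom (Multiplicative (ι → ℝ)) ℂ).comp _ expInnerChar_injective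

theorem eq_zero_of_forall_tsum_mul_exp_inner_eq_zero {U : (ι → ℤ) → ℂ} {S : Finset (ι → ℤ)}
    (hU : ∀ k ∉ S, U k = 0) (h : ∀ θ : ι → ℝ, ∑' k, U k * 𝐞(k, θ) = 0) : U = 0 := by
  funext k
  by_cases hk : k ∈ S
  · refine linearIndependent_iff'.mp linearIndependent_exp_inner S U ?_ k hk
    funext θ
    rw [Pi.zero_apply, ← h θ, tsum_eq_sum fun k hk => by rw [hU k hk, zero_mul]]
    simp [Finset.sum_apply]
  · exact hU k hk

theorem forall_tsum_shift_sub_tsum_eq_iff {U c : (ι → ℤ) → ℂ} {S : Finset (ι → ℤ)}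
    (hU : ∀ k ∉ S, U k = 0) (hc : ∀ k ∉ S, c k = 0) (ω : ι → ℝ) :
    (∀ θ : ι → ℝ, (∑' k, U k * 𝐞(k, θ + ω)) - ∑' k, U k * 𝐞(k, θ) = ∑' k, c k * 𝐞(k, θ)) ↔
      ∀ k, U k * (𝐞(k, ω) - 1) = c k := by
  have hsupp : ∀ k ∉ S, U k * (𝐞(k, ω) - 1) - c k = 0 := fun k hk => by simp [hU k hk, hc k hk]
  have key (θ : ι → ℝ) : (∑' k, U k * 𝐞(k, θ + ω)) - (∑' k, U k * 𝐞(k, θ)) -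
      ∑' k, c k * 𝐞(k, θ) = ∑' k, (U k * (𝐞(k, ω) - 1) - c k) * 𝐞(k, θ) := by
    rw [tsum_eq_sum (s := S) fun k hk => by rw [hU k hk, zero_mul],
      tsum_eq_sum (s := S) fun k hk => by rw [hU k hk, zero_mul],
      tsum_eq_sum (s := S) fun k hk => by rw [hc k hk, zero_mul],
      tsum_eq_sum (s := S) fun k hk => by rw [hsupp k hk, zero_mul],
      ← Finset.sum_sub_distrib, ← Finset.sum_sub_distrib]
    refine Finset.sum_congr rfl fun k _ => ?_
    rw [show 𝐞(k, θ + ω) = 𝐞(k, θ) * 𝐞(k, ω) from map_mul (expInnerChar k) (.ofAdd θ) (.ofAdd ω)]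
    ring
  constructor
  · intro h k
    have hzero := eq_zero_of_forall_tsum_mul_exp_inner_eq_zero hsupp
      fun θ => by rw [← key, h θ, sub_self]
    exact sub_eq_zero.mp (congrFun hzero k)
  · intro h θ
    rw [← sub_eq_zero, key]
    simp only [h, sub_self, zero_mul, tsum_zero]

theorem norm_exp_I_mul_sum_le {k : ι → ℤ} {θ : ι → ℂ} {b : ℝ} (hθ : ∀ i, |(θ i).im| ≤ b) :
    ‖exp (I * ∑ i, (k i : ℂ) * θ i)‖ ≤ Real.exp ((∑ i, |(k i : ℝ)|) * b) := by
  have hre : (I * ∑ i, (k i : ℂ) * θ i).re = -∑ i, (k i : ℝ) * (θ i).im := by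
    simp [Complex.mul_re, Complex.re_sum, Complex.im_sum]
  rw [Complex.norm_exp, Real.exp_le_exp, hre, Finset.sum_mul]
  calc -∑ i, (k i : ℝ) * (θ i).im ≤ ∑ i, |(k i : ℝ) * (θ i).im| :=
        (neg_le_abs _).trans (Finset.abs_sum_le_sum_abs _ _)
    _ ≤ ∑ i, |(k i : ℝ)| * b := by
        gcongr with i
        rw [abs_mul]
        exact mul_le_mul_of_nonneg_left (hθ i) (abs_nonneg _)

end

theorem eq_homSol_iff {n : ℕ} {K : ℝ} {ω : Fin n → ℝ} {c U : (Fin n → ℤ) → ℂ}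
    (hc : ∀ k : Fin n → ℤ, ¬(0 < ∑ i, |(k i : ℝ)| ∧ ∑ i, |(k i : ℝ)| ≤ K) → c k = 0)
    (hdiv : ∀ k : Fin n → ℤ, 0 < ∑ i, |(k i : ℝ)| → ∑ i, |(k i : ℝ)| ≤ K → 𝐞(k, ω) - 1 ≠ 0) :
    ((∀ k : Fin n → ℤ, ¬(0 < ∑ i, |(k i : ℝ)| ∧ ∑ i, |(k i : ℝ)| ≤ K) → U k = 0) ∧
      ∀ k : Fin n → ℤ, U k * (𝐞(k, ω) - 1) = c k) ↔ U = homSol n K ω c := by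
  constructor
  · rintro ⟨hU, h⟩
    funext k
    by_cases hk : 0 < ∑ i, |(k i : ℝ)| ∧ ∑ i, |(k i : ℝ)| ≤ K
    · rw [homSol, if_pos hk, eq_div_iff (hdiv k hk.1 hk.2), h k]
    · rw [homSol, if_neg hk, hU k hk]
  · rintro rfl
    refine ⟨fun k hk => by rw [homSol, if_neg hk], fun k => ?_⟩
    by_cases hk : 0 < ∑ i, |(k i : ℝ)| ∧ ∑ i, |(k i : ℝ)| ≤ K
    · rw [homSol, if_pos hk, div_mul_cancel₀ _ (hdiv k hk.1 hk.2)]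
    · rw [homSol, if_neg hk, hc k hk, zero_mul]

theorem norm_div_mul_le_of_divisor_bound {c E e : ℂ} {γ τ M a b r : ℝ} (hγ : 0 < γ) (hr : 0 < r)
    (hE : 2 / π * γ * r ^ (-τ) ≤ ‖E‖) (hc : ‖c‖ ≤ M * Real.exp (-(r * a)))
    (he : ‖e‖ ≤ Real.exp (r * b)) :
    ‖c / E * e‖ ≤ π / 2 * γ⁻¹ * M * (r ^ τ * Real.exp (-(r * (a - b)))) := by
  have hM : 0 ≤ M * Real.exp (-(r * a)) := (norm_nonneg c).trans hc
  calc ‖c / E * e‖ = ‖c‖ / ‖E‖ * ‖e‖ := by rw [norm_mul, norm_div]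
    _ ≤ M * Real.exp (-(r * a)) / (2 / π * γ * r ^ (-τ)) * Real.exp (r * b) := by gcongr
    _ = π / 2 * γ⁻¹ * M * (r ^ τ * Real.exp (-(r * (a - b)))) := by
      rw [Real.rpow_neg hr.le, show -(r * (a - b)) = -(r * a) + r * b by ring, Real.exp_add]
      field_simp

theorem homological_equation_solution_general
    (n : ℕ) (γ τ K : ℝ) (hγ : 0 < γ)
    (ω : Fin n → ℝ)
    (hdio : ∀ k : Fin n → ℤ, 0 < (∑ i, |(k i : ℝ)|) → (∑ i, |(k i : ℝ)|) ≤ K →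
      ∀ k₀ : ℤ, γ * (∑ i, |(k i : ℝ)|) ^ (-τ)
        ≤ |(∑ i, (k i : ℝ) * ω i) - 2 * π * (k₀ : ℝ)|) :
    (∀ k : Fin n → ℤ, 0 < (∑ i, |(k i : ℝ)|) → (∑ i, |(k i : ℝ)|) ≤ K →
      (2 / π) * γ * (∑ i, |(k i : ℝ)|) ^ (-τ)
        ≤ ‖Complex.exp (Complex.I * ((∑ i, (k i : ℝ) * ω i : ℝ) : ℂ)) - 1‖) ∧
    ∀ c : (Fin n → ℤ) → ℂ,
      (∀ k : Fin n → ℤ, ¬(0 < (∑ i, |(k i : ℝ)|) ∧ (∑ i, |(k i : ℝ)|) ≤ K) → c k = 0) →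
      (∀ U : (Fin n → ℤ) → ℂ,
        ((∀ k : Fin n → ℤ,
            ¬(0 < (∑ i, |(k i : ℝ)|) ∧ (∑ i, |(k i : ℝ)|) ≤ K) → U k = 0) ∧
         (∀ θ : Fin n → ℝ,
            ((∑' k : Fin n → ℤ,
                U k * Complex.exp (Complex.I * ((∑ i, (k i : ℝ) * (θ i + ω i) : ℝ) : ℂ))) -
              ∑' k : Fin n → ℤ,
                U k * Complex.exp (Complex.I * ((∑ i, (k i : ℝ) * θ i : ℝ) : ℂ)))
            = ∑' k : Fin n → ℤ,
                c k * Complex.exp (Complex.I * ((∑ i, (k i : ℝ) * θ i : ℝ) : ℂ)))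
        ↔ U = homSol n K ω c)) ∧
      ∀ M a : ℝ, 0 ≤ M → 0 < a →
        (∀ k : Fin n → ℤ, ‖c k‖ ≤ M * Real.exp (-((∑ i, |(k i : ℝ)|) * a))) →
        ∀ b : ℝ, 0 ≤ b → b < a →
          ∀ θ : Fin n → ℂ, (∑ i, |(θ i).im|) ≤ b →
            ‖∑' k : Fin n → ℤ,
                homSol n K ω c k * Complex.exp (Complex.I * ∑ i, (k i : ℂ) * θ i)‖
              ≤ (π / 2) * γ⁻¹ * M *
                ∑' k : Fin n → ℤ,
                  (if 0 < (∑ i, |(k i : ℝ)|) ∧ (∑ i, |(k i : ℝ)|) ≤ K then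
                    (∑ i, |(k i : ℝ)|) ^ τ * Real.exp (-((∑ i, |(k i : ℝ)|) * (a - b)))
                  else 0) := by
  set S := (finite_setOf_sum_abs_le (ι := Fin n) K).toFinset
  have hS : ∀ k ∉ S, ¬(0 < ∑ i, |(k i : ℝ)| ∧ ∑ i, |(k i : ℝ)| ≤ K) := fun k hk hP =>
    hk ((Set.Finite.mem_toFinset _).mpr hP.2)
  have hdivisor : ∀ k : Fin n → ℤ, 0 < ∑ i, |(k i : ℝ)| → ∑ i, |(k i : ℝ)| ≤ K →
      2 / π * γ * (∑ i, |(k i : ℝ)|) ^ (-τ) ≤ ‖𝐞(k, ω) - 1‖ := fun k hk hkK => by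
    obtain ⟨k₀, hk₀⟩ := exists_two_div_pi_mul_abs_sub_le_norm_exp_I_mul_sub_one (∑ i, k i * ω i)
    rw [mul_assoc]
    exact (mul_le_mul_of_nonneg_left (hdio k hk hkK k₀) (by positivity)).trans hk₀
  have hdivisor_ne : ∀ k : Fin n → ℤ, 0 < ∑ i, |(k i : ℝ)| → ∑ i, |(k i : ℝ)| ≤ K →
      𝐞(k, ω) - 1 ≠ 0 := fun k hk hkK =>
    norm_pos_iff.mp <| (mul_pos (by positivity) (Real.rpow_pos_of_pos hk _)).trans_le
      (hdivisor k hk hkK)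
  refine ⟨hdivisor, fun c hc => ⟨fun U => ?_, ?_⟩⟩
  · refine Iff.trans (and_congr_right fun hU => ?_) (eq_homSol_iff hc hdivisor_ne)
    exact forall_tsum_shift_sub_tsum_eq_iff (fun k hk => hU k (hS k hk))
      (fun k hk => hc k (hS k hk)) ω
  · intro M a _ _ hbound b _ _ θ hθ
    have hθi (i : Fin n) : |(θ i).im| ≤ b :=
      (Finset.single_le_sum (fun j _ => abs_nonneg (θ j).im) (Finset.mem_univ i)).trans hθ
    rw [tsum_eq_sum (s := S) fun k hk => by rw [homSol, if_neg (hS k hk), zero_mul],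
      tsum_eq_sum (s := S) fun k hk => if_neg (hS k hk), Finset.mul_sum]
    refine (norm_sum_le _ _).trans (Finset.sum_le_sum fun k _ => ?_)
    by_cases hk : 0 < ∑ i, |(k i : ℝ)| ∧ ∑ i, |(k i : ℝ)| ≤ K
    · rw [homSol, if_pos hk, if_pos hk]
      exact norm_div_mul_le_of_divisor_bound hγ hk.1 (hdivisor k hk.1 hk.2) (hbound k)
        (norm_exp_I_mul_sum_le hθi)
    · rw [homSol, if_neg hk, if_neg hk, zero_mul, norm_zero, mul_zero]

/-- Lemma 4.3: under a Diophantine condition on `ω` up to order `K`,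
(a) the divisors satisfy `|e^{i⟨k,ω⟩} − 1| ≥ (2/π)γ|k|^{−τ}`;
(b) for coefficients `c` supported on `0 < |k| ≤ K`, a coefficient family supported there
solves the difference equation `U(θ+ω) − U(θ) = Σ c_k e^{i⟨k,θ⟩}` iff it is `homSol`;
(c) if `|c_k| ≤ M e^{−|k|a}`, then on `|Im θ| ≤ b < a` the solution obeys
`|U(θ)| ≤ (π/2) γ⁻¹ M Σ_{0<|k|≤K} |k|^τ e^{−|k|(a−b)}`. -/
theorem homological_equation_solution
    (n : ℕ) (hn : 1 ≤ n) (γ τ K : ℝ) (hγ : 0 < γ) (hτ : 0 < τ) (hK : 1 ≤ K)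
    (ω : Fin n → ℝ)
    (hdio : ∀ k : Fin n → ℤ, 0 < (∑ i, |(k i : ℝ)|) → (∑ i, |(k i : ℝ)|) ≤ K →
      ∀ k₀ : ℤ, γ * (∑ i, |(k i : ℝ)|) ^ (-τ)
        ≤ |(∑ i, (k i : ℝ) * ω i) - 2 * π * (k₀ : ℝ)|) :
    (∀ k : Fin n → ℤ, 0 < (∑ i, |(k i : ℝ)|) → (∑ i, |(k i : ℝ)|) ≤ K →
      (2 / π) * γ * (∑ i, |(k i : ℝ)|) ^ (-τ)
        ≤ ‖Complex.exp (Complex.I * ((∑ i, (k i : ℝ) * ω i : ℝ) : ℂ)) - 1‖) ∧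
    ∀ c : (Fin n → ℤ) → ℂ,
      (∀ k : Fin n → ℤ, ¬(0 < (∑ i, |(k i : ℝ)|) ∧ (∑ i, |(k i : ℝ)|) ≤ K) → c k = 0) →
      (∀ U : (Fin n → ℤ) → ℂ,
        ((∀ k : Fin n → ℤ,
            ¬(0 < (∑ i, |(k i : ℝ)|) ∧ (∑ i, |(k i : ℝ)|) ≤ K) → U k = 0) ∧
         (∀ θ : Fin n → ℝ,
            ((∑' k : Fin n → ℤ,
                U k * Complex.exp (Complex.I * ((∑ i, (k i : ℝ) * (θ i + ω i) : ℝ) : ℂ))) -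
              ∑' k : Fin n → ℤ,
                U k * Complex.exp (Complex.I * ((∑ i, (k i : ℝ) * θ i : ℝ) : ℂ)))
            = ∑' k : Fin n → ℤ,
                c k * Complex.exp (Complex.I * ((∑ i, (k i : ℝ) * θ i : ℝ) : ℂ)))
        ↔ U = homSol n K ω c)) ∧
      ∀ M a : ℝ, 0 ≤ M → 0 < a →
        (∀ k : Fin n → ℤ, ‖c k‖ ≤ M * Real.exp (-((∑ i, |(k i : ℝ)|) * a))) →
        ∀ b : ℝ, 0 ≤ b → b < a →
          ∀ θ : Fin n → ℂ, (∑ i, |(θ i).im|) ≤ b →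
            ‖∑' k : Fin n → ℤ,
                homSol n K ω c k * Complex.exp (Complex.I * ∑ i, (k i : ℂ) * θ i)‖
              ≤ (π / 2) * γ⁻¹ * M *
                ∑' k : Fin n → ℤ,
                  (if 0 < (∑ i, |(k i : ℝ)|) ∧ (∑ i, |(k i : ℝ)|) ≤ K then
                    (∑ i, |(k i : ℝ)|) ^ τ * Real.exp (-((∑ i, |(k i : ℝ)|) * (a - b)))
                  else 0) :=
  homological_equation_solution_general n γ τ K hγ ω hdio
end
end

section
/- Weak convexity forces closeness of successive frequency-equation solutions (core estimate of Lemma 4.5 and Lemma 5.2). Let B ⊂ ℝⁿ, let ϖ₂ be a modulus of continuity, and let ω : B → ℝⁿ satisfy |ω(x) − ω(y)| ≥ ϖ₂(|x − y|) for all x, y ∈ B with 0 < |x − y| ≤ 1. Let ν ≥ 0 and let g₀, …, g_ν : B → ℝⁿ be functions such that |g_i(x) − g_i(y)| ≤ L_i |x − y| for all x, y ∈ B with |x − y| ≤ 1 (0 ≤ i ≤ ν), and assume (Σ_{i=0}^{ν−1} L_i) · x ≤ ϖ₂(x)/2 for all x ∈ (0,1]. If a, b ∈ B with 0 < |a − b|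 ≤ 1 satisfy ω(a) + Σ_{i=0}^{ν−1} g_i(a) = ω(b) + Σ_{i=0}^{ν} g_i(b), then ϖ₂(|a − b|) ≤ 2 |g_ν(b)|. -/
open scoped Real

noncomputable section

/-!
Subtracting the two frequency equations writes `ω a - ω b` as `g_ν b` plus the differences
`g_i b - g_i a`, `i < ν`. By the Lipschitz bounds these differences have total size at most
`(∑ L_i) |a - b| ≤ ϖ₂ |a - b| / 2`, whereas weak convexity makes `ω a - ω b` at least
`ϖ₂ |a - b|`; so `g_ν b` must carry the remaining `ϖ₂ |a - b| / 2`.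
-/

open Finset

section FrequencyEquation

variable {α E : Type*} [SeminormedAddCommGroup E] {ω : α → E} {g : ℕ → α → E} {ν : ℕ} {a b : α}

lemma norm_sub_le_sum_norm_sub_add_norm
    (h : ω a + ∑ i ∈ range ν, g i a = ω b + ∑ i ∈ range (ν + 1), g i b) :
    ‖ω a - ω b‖ ≤ ∑ i ∈ range ν, ‖g i b - g i a‖ + ‖g ν b‖ := by
  rw [sum_range_succ] at h
  have hdiff : ω a - ω b = ∑ i ∈ range ν, (g i b - g i a) + g ν b :=
    calc ω a - ω b = (ω a + ∑ i ∈ range ν, g i a) - ω b - ∑ i ∈ range ν, g i a := by abel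
      _ = ∑ i ∈ range ν, (g i b - g i a) + g ν b := by rw [h, sum_sub_distrib]; abel
  rw [hdiff]
  exact (norm_add_le _ _).trans (by gcongr; exact norm_sum_le _ _)

lemma le_two_mul_norm_of_add_sum_eq {w d : ℝ} {L : ℕ → ℝ} (hω : w ≤ ‖ω a - ω b‖)
    (hg : ∀ i < ν, ‖g i b - g i a‖ ≤ L i * d) (hL : (∑ i ∈ range ν, L i) * d ≤ w / 2)
    (h : ω a + ∑ i ∈ range ν, g i a = ω b + ∑ i ∈ range (ν + 1), g i b) :
    w ≤ 2 * ‖g ν b‖ := by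
  have hsum : ∑ i ∈ range ν, ‖g i b - g i a‖ ≤ (∑ i ∈ range ν, L i) * d := by
    rw [sum_mul]
    exact sum_le_sum fun i hi => hg i (mem_range.mp hi)
  linarith [norm_sub_le_sum_norm_sub_add_norm h]

end FrequencyEquation

lemma norm_toLp_one_eq_sum_abs {ι : Type*} [Fintype ι] (x : ι → ℝ) :
    ‖WithLp.toLp 1 x‖ = ∑ i, |x i| := by
  simp [PiLp.norm_eq_of_L1]

lemma sum_abs_sub_eq_norm_toLp_one_sub {ι : Type*} [Fintype ι] (x y : ι → ℝ) :
    ∑ i, |x i - y i| = ‖WithLp.toLp 1 x - WithLp.toLp 1 y‖ := by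
  rw [← WithLp.toLp_sub, norm_toLp_one_eq_sum_abs, Pi.sub_def]

theorem weak_convexity_frequency_estimate_general
    (n : ℕ) (B : Set (Fin n → ℝ)) (ϖ₂ : ℝ → ℝ)
    (ω : (Fin n → ℝ) → (Fin n → ℝ))
    (hω : ∀ x ∈ B, ∀ y ∈ B, 0 < (∑ i, |x i - y i|) → (∑ i, |x i - y i|) ≤ 1 →
      ϖ₂ (∑ i, |x i - y i|) ≤ ∑ j, |ω x j - ω y j|)
    (ν : ℕ) (g : ℕ → (Fin n → ℝ) → (Fin n → ℝ)) (L : ℕ → ℝ)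
    (hg : ∀ i ≤ ν, ∀ x ∈ B, ∀ y ∈ B, (∑ i', |x i' - y i'|) ≤ 1 →
      (∑ j, |g i x j - g i y j|) ≤ L i * ∑ i', |x i' - y i'|)
    (hL : ∀ x : ℝ, 0 < x → x ≤ 1 → (∑ i ∈ Finset.range ν, L i) * x ≤ ϖ₂ x / 2)
    (a b : Fin n → ℝ) (ha : a ∈ B) (hb : b ∈ B)
    (hab : 0 < ∑ i, |a i - b i|) (hab1 : (∑ i, |a i - b i|) ≤ 1)
    (heq : ∀ j, ω a j + (∑ i ∈ Finset.range ν, g i a j)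
              = ω b j + ∑ i ∈ Finset.range (ν + 1), g i b j) :
    ϖ₂ (∑ i, |a i - b i|) ≤ 2 * ∑ j, |g ν b j| := by
  have hba : ∑ i, |b i - a i| = ∑ i, |a i - b i| := by simp only [abs_sub_comm]
  rw [← norm_toLp_one_eq_sum_abs (g ν b)]
  refine le_two_mul_norm_of_add_sum_eq (ω := fun x => WithLp.toLp 1 (ω x))
    (g := fun i x => WithLp.toLp 1 (g i x)) (a := a) ?_ ?_ (hL _ hab hab1) ?_
  · rw [← sum_abs_sub_eq_norm_toLp_one_sub]
    exact hω a ha b hb hab hab1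
  · intro i hi
    rw [← sum_abs_sub_eq_norm_toLp_one_sub, ← hba]
    exact hg i hi.le b hb a ha (hba ▸ hab1)
  · simp only [← WithLp.toLp_sum, ← WithLp.toLp_add]
    congr 1
    funext j
    simpa only [Pi.add_apply, Finset.sum_apply] using heq j

/-- Core estimate of Lemma 4.5/5.2: weak convexity of the frequency map forces
closeness of successive solutions of the frequency equation (ℓ¹ norms throughout). -/
theorem weak_convexity_frequency_estimate
    (n : ℕ) (B : Set (Fin n → ℝ)) (ϖ₂ : ℝ → ℝ) (h2 : IsModulusOfContinuity ϖ₂)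
    (ω : (Fin n → ℝ) → (Fin n → ℝ))
    (hω : ∀ x ∈ B, ∀ y ∈ B, 0 < (∑ i, |x i - y i|) → (∑ i, |x i - y i|) ≤ 1 →
      ϖ₂ (∑ i, |x i - y i|) ≤ ∑ j, |ω x j - ω y j|)
    (ν : ℕ) (g : ℕ → (Fin n → ℝ) → (Fin n → ℝ)) (L : ℕ → ℝ)
    (hg : ∀ i ≤ ν, ∀ x ∈ B, ∀ y ∈ B, (∑ i', |x i' - y i'|) ≤ 1 →
      (∑ j, |g i x j - g i y j|) ≤ L i * ∑ i', |x i' - y i'|)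
    (hL : ∀ x : ℝ, 0 < x → x ≤ 1 → (∑ i ∈ Finset.range ν, L i) * x ≤ ϖ₂ x / 2)
    (a b : Fin n → ℝ) (ha : a ∈ B) (hb : b ∈ B)
    (hab : 0 < ∑ i, |a i - b i|) (hab1 : (∑ i, |a i - b i|) ≤ 1)
    (heq : ∀ j, ω a j + (∑ i ∈ Finset.range ν, g i a j)
              = ω b j + ∑ i ∈ Finset.range (ν + 1), g i b j) :
    ϖ₂ (∑ i, |a i - b i|) ≤ 2 * ∑ j, |g ν b j| :=
  weak_convexity_frequency_estimate_general n B ϖ₂ ω hω ν g L hg hL a b ha hb hab hab1 heq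
end
end
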